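/- Let U : (ℂ[z])² → M₂(ℂ) be a vector of functionals (left M₂(ℂ)-linear in the sense U(A·Q) = A·U(Q)) satisfying the orthogonality conditions U(z^j B_m) = 0 for 0 ≤ j ≤ m−1 and the vector recurrence C_n B_{n-1} + (B_{n+1} − zI₂) B_n + A B_{n+1} = 0. Then U(z^m B_m) = C_m U(z^{m-1} B_{m-1}) for all m ≥ 1; consequently, if U(B_0) = C_0, then U(z^m B_m) = C_m C_{m-1} ⋯ C_0. -/

import Mathlib

/-!
Pairing two steps of the scalar four-term recurrence turns it into the block three-term
recurrence `z B_{k+1} = A B_{k+2} + B_{k+2} B_{k+1} + C_{k+1} B_k`. Multiply it by `z^k` and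
apply `U`: left `M₂(ℂ)`-linearity pulls the matrices out, and orthogonality kills the first
two terms since `k < k + 1 < k + 2`, leaving `U(z^{k+1} B_{k+1}) = C_{k+1} U(z^k B_k)`.
Iterating from `U(B_0) = C_0` gives the product formula.
-/

open Polynomial Matrix

noncomputable section

/-- Auxiliary shifted sequence: `Paux (n+2) = P_n`. -/
def Paux (a b c : ℕ → ℂ) : ℕ → Polynomial ℂ
  | 0 => 0
  | 1 => 0
  | 2 => 1
  | n + 3 =>
      (X - C (a (n + 1))) * Paux a b c (n + 2)
        - C (b n) * Paux a b c (n + 1) - C (c (n - 1)) * Paux a b c n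

/-- The polynomials `P_n` of the four-term recurrence. -/
def Pp (a b c : ℕ → ℂ) (n : ℕ) : Polynomial ℂ := Paux a b c (n + 2)

/-- The vector polynomials `B_m = (P_{2m}, P_{2m+1})ᵀ`. -/
def Bv (a b c : ℕ → ℂ) (m : ℕ) : Fin 2 → Polynomial ℂ :=
  ![Pp a b c (2 * m), Pp a b c (2 * m + 1)]

/-- The block `C_n = [[c_{2n-1}, b_{2n}],[0, c_{2n}]]` for `n ≥ 1`, with
`C_0 = [[1,0],[−a_1,1]]`. -/
def Cblk (a b c : ℕ → ℂ) (n : ℕ) : Matrix (Fin 2) (Fin 2) ℂ :=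
  if n = 0 then !![1, 0; -(a 1), 1]
  else !![c (2 * n - 1), b (2 * n); 0, c (2 * n)]

/-- The product `C_m C_{m-1} ⋯ C_0`. -/
def Cprod (a b c : ℕ → ℂ) : ℕ → Matrix (Fin 2) (Fin 2) ℂ
  | 0 => Cblk a b c 0
  | m + 1 => Cblk a b c (m + 1) * Cprod a b c m

def Ablk : Matrix (Fin 2) (Fin 2) ℂ := !![0, 0; 1, 0]

def Bblk (a b : ℕ → ℂ) (n : ℕ) : Matrix (Fin 2) (Fin 2) ℂ :=
  !![a (2 * n - 1), 1; b (2 * n - 1), a (2 * n)]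

lemma X_smul_Bv_succ (a b c : ℕ → ℂ) (k : ℕ) :
    (X : ℂ[X]) • Bv a b c (k + 1) =
      Ablk.map C *ᵥ Bv a b c (k + 2) + (Bblk a b (k + 2)).map C *ᵥ Bv a b c (k + 1)
        + (Cblk a b c (k + 1)).map C *ᵥ Bv a b c k := by
  have h₁ : 2 * (k + 1) = 2 * k + 2 := by ring
  have h₂ : 2 * (k + 2) = 2 * k + 4 := by ring
  funext i
  fin_cases i <;>
    simp [Bv, Pp, Ablk, Bblk, Cblk, h₁, h₂, Paux] <;>
    ring

lemma apply_X_pow_succ_smul_eq_mul {R ι : Type*} [CommRing R] [Fintype ι]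
    (U : (ι → R[X]) →ₗ[R] Matrix ι ι R)
    (hU : ∀ (M : Matrix ι ι R) (Q : ι → R[X]), U (M.map C *ᵥ Q) = M * U Q)
    {Q₀ Q₁ Q₂ : ι → R[X]} {A B M : Matrix ι ι R}
    (hrec : (X : R[X]) • Q₁ = A.map C *ᵥ Q₂ + B.map C *ᵥ Q₁ + M.map C *ᵥ Q₀) (k : ℕ)
    (h₂ : U ((X : R[X]) ^ k • Q₂) = 0) (h₁ : U ((X : R[X]) ^ k • Q₁) = 0) :
    U ((X : R[X]) ^ (k + 1) • Q₁) = M * U ((X : R[X]) ^ k • Q₀) := by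
  rw [pow_succ, mul_smul, hrec, smul_add, smul_add, ← mulVec_smul, ← mulVec_smul,
    ← mulVec_smul, map_add, map_add, hU, hU, hU, h₂, h₁]
  simp

theorem moment_chain_general (a b c : ℕ → ℂ)
    (U : (Fin 2 → Polynomial ℂ) →ₗ[ℂ] Matrix (Fin 2) (Fin 2) ℂ)
    (hM2 : ∀ (A : Matrix (Fin 2) (Fin 2) ℂ) (Q : Fin 2 → Polynomial ℂ),
      U (A.map C *ᵥ Q) = A * U Q)
    (horth : ∀ m j : ℕ, j < m → U (fun i => X ^ j * Bv a b c m i) = 0) :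
    (∀ m : ℕ, 1 ≤ m →
      U (fun i => X ^ m * Bv a b c m i) =
        Cblk a b c m * U (fun i => X ^ (m - 1) * Bv a b c (m - 1) i)) ∧
    (U (Bv a b c 0) = Cblk a b c 0 →
      ∀ m : ℕ, U (fun i => X ^ m * Bv a b c m i) = Cprod a b c m) := by
  have step : ∀ k : ℕ, U (X ^ (k + 1) • Bv a b c (k + 1)) =
      Cblk a b c (k + 1) * U (X ^ k • Bv a b c k) := fun k =>
    apply_X_pow_succ_smul_eq_mul U hM2 (X_smul_Bv_succ a b c k) k
      (horth (k + 2) k (by omega)) (horth (k + 1) k (by omega))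
  refine ⟨fun m hm => ?_, fun h₀ m => ?_⟩
  · obtain ⟨k, rfl⟩ : ∃ k, m = k + 1 := ⟨m - 1, by omega⟩
    exact step k
  · induction m with
    | zero =>
      show U ((X : ℂ[X]) ^ 0 • Bv a b c 0) = _
      rwa [pow_zero, one_smul]
    | succ k ih => exact (step k).trans (congrArg _ ih)

/-- If `U` is left `M₂(ℂ)`-linear and satisfies the orthogonality conditions
`U(z^j B_m) = 0` for `j < m`, then `U(z^m B_m) = C_m U(z^{m-1} B_{m-1})` for `m ≥ 1`;
consequently, if `U(B₀) = C₀`, then `U(z^m B_m) = C_m C_{m-1} ⋯ C₀`. -/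
theorem moment_chain (a b c : ℕ → ℂ) (hb0 : b 0 = 0) (hc0 : c 0 = 0)
    (U : (Fin 2 → Polynomial ℂ) →ₗ[ℂ] Matrix (Fin 2) (Fin 2) ℂ)
    (hM2 : ∀ (A : Matrix (Fin 2) (Fin 2) ℂ) (Q : Fin 2 → Polynomial ℂ),
      U (A.map C *ᵥ Q) = A * U Q)
    (horth : ∀ m j : ℕ, j < m → U (fun i => X ^ j * Bv a b c m i) = 0) :
    (∀ m : ℕ, 1 ≤ m →
      U (fun i => X ^ m * Bv a b c m i) =
        Cblk a b c m * U (fun i => X ^ (m - 1) * Bv a b c (m - 1) i)) ∧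
    (U (Bv a b c 0) = Cblk a b c 0 →
      ∀ m : ℕ, U (fun i => X ^ m * Bv a b c m i) = Cprod a b c m) :=
  moment_chain_general a b c U hM2 horth
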